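/- arXiv:1101.3252 — 2 statements merged into one kernel-verified Lean document; each statement's English description precedes it below -/
import Mathlib

section
/- Let Q and Q̃ be axis-parallel squares in ℝ² with centers x and x̃ respectively, with x ≠ x̃. Let Θ_{Q,Q̃} be the set of angles θ ∈ [−π/2, π/2] for which the orthogonal projections of Q and Q̃ onto the line L_θ through the origin in direction (cos θ, sin θ) intersect. Then the Lebesgue measure of Θ_{Q,Q̃} is at most 2π · max{|Q|, |Q̃|} / |x − x̃|, where |Q| denotes the diameter of Q. -/
open MeasureTheory Set Metric ENNReal Real

noncomputable section

/-- The plane with the Euclidean metric. -/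
abbrev E := EuclideanSpace ℝ (Fin 2)

/-- The half-open dyadic square `[a·2⁻ⁱ, (a+1)·2⁻ⁱ) × [b·2⁻ⁱ, (b+1)·2⁻ⁱ)`. -/
def dyadicSq (i a b : ℤ) : Set E :=
  {p | p 0 ∈ Set.Ico ((a : ℝ) * 2 ^ (-i)) ((a + 1 : ℝ) * 2 ^ (-i)) ∧
       p 1 ∈ Set.Ico ((b : ℝ) * 2 ^ (-i)) ((b + 1 : ℝ) * 2 ^ (-i))}

/-- A dyadic square is an element of some family `𝒟ᵢ`. -/
def IsDyadicSquare (S : Set E) : Prop := ∃ i a b : ℤ, S = dyadicSq i a b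
/-- The orthogonal projection onto the line `L_θ = ℝ·(cos θ, sin θ)`, identified with ℝ
via the isometry `t·v_θ ↦ t`. -/
def proj (θ : ℝ) (p : E) : ℝ := p 0 * Real.cos θ + p 1 * Real.sin θ
/-- The axis-parallel square with center `c` and side length `l`. -/
def sqc (c : E) (l : ℝ) : Set E :=
  {p | p 0 ∈ Set.Ico (c 0 - l / 2) (c 0 + l / 2) ∧
       p 1 ∈ Set.Ico (c 1 - l / 2) (c 1 + l / 2)}

/-!
The projections of the two centres differ by `|x - x̃| · sin (θ + α)` for a fixed phase `α`, and
overlapping projections force this to be at most `max {|Q|, |Q̃|}`, because every point of a square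
lies within half its diameter of its centre. On an interval of length `π`, the angles with
`|sin (θ + α)| ≤ ε` lie in two intervals of length `2 arcsin ε ≤ π ε` around zeros of `sin (· + α)`.
-/

lemma exists_mul_cos_add_mul_sin_eq (a b : ℝ) :
    ∃ α : ℝ, ∀ θ : ℝ, a * cos θ + b * sin θ = √(a ^ 2 + b ^ 2) * sin (θ + α) := by
  set z : ℂ := ⟨b, a⟩
  have hz : ‖z‖ = √(a ^ 2 + b ^ 2) := by
    rw [Complex.norm_def, Complex.normSq_mk]
    congr 1
    ring
  refine ⟨Complex.arg z, fun θ => ?_⟩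
  have hre : ‖z‖ * cos (Complex.arg z) = b := Complex.norm_mul_cos_arg z
  have him : ‖z‖ * sin (Complex.arg z) = a := Complex.norm_mul_sin_arg z
  rw [← hz, sin_add, ← hre, ← him]
  ring

lemma abs_sub_round_div_pi_mul_pi_le_arcsin {u ε : ℝ} (h : |sin u| ≤ ε) :
    |u - round (u / π) * π| ≤ arcsin ε := by
  set v := u - round (u / π) * π
  have hv : |v| ≤ π / 2 := by
    have hvπ : v = (u / π - round (u / π)) * π := by rw [sub_mul, div_mul_cancel₀ _ pi_ne_zero]
    rw [hvπ, abs_mul, abs_of_pos pi_pos]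
    nlinarith [abs_sub_round (u / π), pi_pos]
  have hsin : |sin v| = |sin u| := by
    rw [sin_sub_int_mul_pi, abs_mul, abs_zpow, abs_neg, abs_one, one_zpow, one_mul]
  calc |v| = arcsin (sin |v|) := (arcsin_sin (by linarith [abs_nonneg v, pi_pos]) hv).symm
    _ = arcsin |sin u| := by rw [← abs_sin_eq_sin_abs_of_abs_le_pi (by linarith [pi_pos]), hsin]
    _ ≤ arcsin ε := arcsin_le_arcsin h

lemma arcsin_le_pi_div_two_mul {ε : ℝ} (hε : 0 ≤ ε) : arcsin ε ≤ π / 2 * ε := by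
  rcases le_total ε 1 with hε1 | hε1
  · -- Jordan's inequality `2 / π * t ≤ sin t` at `t = arcsin ε`
    have h := mul_le_sin (arcsin_nonneg.2 hε) (arcsin_le_pi_div_two ε)
    rw [sin_arcsin (by linarith) hε1, div_mul_eq_mul_div, div_le_iff₀ pi_pos] at h
    linarith
  · nlinarith [arcsin_le_pi_div_two ε, pi_pos]

lemma volume_setOf_abs_sin_add_le {a b : ℝ} (hab : b ≤ a + π) (α : ℝ) {ε : ℝ} (hε : 0 ≤ ε) :
    volume {θ ∈ Icc a b | |sin (θ + α)| ≤ ε} ≤ ENNReal.ofReal (2 * π * ε) := by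
  set δ := arcsin ε
  set m := round ((a + α) / π)
  -- only the zeros `kπ - α` of `sin (· + α)` with `k = m, m + 1` can be near `[a, b]`
  let I : ℤ → Set ℝ := fun k => Icc (k * π - α - δ) (k * π - α + δ)
  have hsub : {θ ∈ Icc a b | |sin (θ + α)| ≤ ε} ⊆ I m ∪ I (m + 1) := by
    rintro θ ⟨⟨haθ, hθb⟩, hθ⟩
    have hnear := abs_le.1 (abs_sub_round_div_pi_mul_pi_le_arcsin hθ)
    have hmk : m ≤ round ((θ + α) / π) := by
      simp only [m, round_eq]
      exact Int.floor_le_floor (by gcongr)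
    have hkm : round ((θ + α) / π) ≤ m + 1 := by
      have h : (θ + α) / π ≤ (a + α) / π + 1 := by
        rw [div_add_one pi_ne_zero]
        exact div_le_div_of_nonneg_right (by linarith) pi_pos.le
      rw [← round_add_one]
      simp only [round_eq]
      exact Int.floor_le_floor (by linarith)
    rcases (by omega : round ((θ + α) / π) = m ∨ round ((θ + α) / π) = m + 1) with hk | hk
    · left
      rw [hk] at hnear
      constructor <;> linarith
    · right
      rw [hk] at hnear
      constructor <;> linarith
  calc volume {θ ∈ Icc a b | |sin (θ + α)| ≤ ε}
      ≤ volume (I m ∪ I (m + 1)) := measure_mono hsub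
    _ ≤ volume (I m) + volume (I (m + 1)) := measure_union_le _ _
    _ = ENNReal.ofReal (2 * δ + 2 * δ) := by
      have hδ : 0 ≤ 2 * δ := by linarith [arcsin_nonneg.2 hε]
      rw [ENNReal.ofReal_add hδ hδ]
      simp only [I, Real.volume_Icc]
      congr 2 <;> ring
    _ ≤ ENNReal.ofReal (2 * π * ε) :=
      ENNReal.ofReal_le_ofReal (by nlinarith [arcsin_le_pi_div_two_mul hε])

lemma dist_eq_sqrt_sq_add_sq (p q : E) : dist p q = √((p 0 - q 0) ^ 2 + (p 1 - q 1) ^ 2) := by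
  rw [EuclideanSpace.dist_eq, Fin.sum_univ_two, Real.dist_eq, Real.dist_eq, sq_abs, sq_abs]

lemma abs_proj_sub_proj_le_dist (θ : ℝ) (p q : E) : |proj θ p - proj θ q| ≤ dist p q := by
  rw [dist_eq_sqrt_sq_add_sq, ← sqrt_sq_eq_abs]
  refine sqrt_le_sqrt ?_
  simp only [proj]
  nlinarith [sin_sq_add_cos_sq θ, sq_nonneg ((p 0 - q 0) * sin θ - (p 1 - q 1) * cos θ)]

lemma exists_proj_sub_proj_eq_dist_mul_sin (p q : E) :
    ∃ α : ℝ, ∀ θ : ℝ, proj θ p - proj θ q = dist p q * sin (θ + α) := by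
  obtain ⟨α, hα⟩ := exists_mul_cos_add_mul_sin_eq (p 0 - q 0) (p 1 - q 1)
  refine ⟨α, fun θ => ?_⟩
  rw [dist_eq_sqrt_sq_add_sq, ← hα, proj, proj]
  ring

lemma dist_le_of_mem_sqc {c p : E} {l : ℝ} (hp : p ∈ sqc c l) : dist p c ≤ √2 * l / 2 := by
  obtain ⟨⟨h0, h0'⟩, ⟨h1, h1'⟩⟩ := hp
  have hl : 0 ≤ l / 2 := by linarith
  calc dist p c ≤ √((l / 2) ^ 2 + (l / 2) ^ 2) := by
        rw [dist_eq_sqrt_sq_add_sq]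
        exact sqrt_le_sqrt (by nlinarith)
    _ = √2 * l / 2 := by
        rw [← two_mul, sqrt_mul zero_le_two, sqrt_sq hl]
        ring

lemma isBounded_sqc (c : E) (l : ℝ) : Bornology.IsBounded (sqc c l) :=
  isBounded_closedBall.subset fun _ hp => mem_closedBall.2 (dist_le_of_mem_sqc hp)

lemma sqrt_two_mul_le_diam_sqc (c : E) (l : ℝ) : √2 * l ≤ diam (sqc c l) := by
  refine le_of_forall_lt_imp_le_of_dense fun s hs => ?_
  rcases le_or_gt s 0 with hs0 | hs0
  · exact hs0.trans diam_nonneg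
  -- two points of the square on its diagonal, at distance `s`
  set t := s / √2
  have ht : 0 < t := by positivity
  have htl : t < l := by rwa [div_lt_iff₀ (by positivity), mul_comm]
  set a : E := !₂[c 0 - l / 2, c 1 - l / 2]
  set b : E := !₂[c 0 - l / 2 + t, c 1 - l / 2 + t]
  have ha : a ∈ sqc c l := by
    simp only [sqc, a, mem_ofPred_eq, mem_Ico, Matrix.cons_val_zero, Matrix.cons_val_one,
      Matrix.cons_val_fin_one]
    refine ⟨⟨?_, ?_⟩, ⟨?_, ?_⟩⟩ <;> linarith
  have hb : b ∈ sqc c l := by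
    simp only [sqc, b, mem_ofPred_eq, mem_Ico, Matrix.cons_val_zero, Matrix.cons_val_one,
      Matrix.cons_val_fin_one]
    refine ⟨⟨?_, ?_⟩, ⟨?_, ?_⟩⟩ <;> linarith
  calc s = √2 * t := by simp only [t]; field_simp
    _ = dist b a := by
        rw [dist_eq_sqrt_sq_add_sq]
        simp only [a, b, Matrix.cons_val_zero, Matrix.cons_val_one, Matrix.cons_val_fin_one,
          add_sub_cancel_left, ← two_mul, sqrt_mul zero_le_two, sqrt_sq ht.le]
    _ ≤ diam (sqc c l) := dist_le_diam_of_mem (isBounded_sqc c l) hb ha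

lemma abs_proj_sub_proj_center_le_half_diam (θ : ℝ) {c p : E} {l : ℝ} (hp : p ∈ sqc c l) :
    |proj θ c - proj θ p| ≤ diam (sqc c l) / 2 := by
  rw [abs_sub_comm]
  linarith [abs_proj_sub_proj_le_dist θ p c, dist_le_of_mem_sqc hp, sqrt_two_mul_le_diam_sqc c l]

lemma abs_proj_sub_proj_le_max_diam {θ : ℝ} {x x' : E} {l l' : ℝ}
    (h : (proj θ '' sqc x l ∩ proj θ '' sqc x' l').Nonempty) :
    |proj θ x - proj θ x'| ≤ max (diam (sqc x l)) (diam (sqc x' l')) := by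
  obtain ⟨_, ⟨p, hp, rfl⟩, ⟨q, hq, hpq⟩⟩ := h
  have hx := abs_proj_sub_proj_center_le_half_diam θ hp
  have hx' := abs_proj_sub_proj_center_le_half_diam θ hq
  rw [hpq, abs_sub_comm] at hx'
  calc |proj θ x - proj θ x'| ≤ |proj θ x - proj θ p| + |proj θ p - proj θ x'| := abs_sub_le ..
    _ ≤ max (diam (sqc x l)) (diam (sqc x' l')) := by
      linarith [le_max_left (diam (sqc x l)) (diam (sqc x' l')),
        le_max_right (diam (sqc x l)) (diam (sqc x' l'))]

theorem measure_angles_of_overlapping_projections_general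
    (x x' : E) (l l' : ℝ) (hxx : x ≠ x') :
    volume {θ ∈ Set.Icc (-(π / 2)) (π / 2) |
        (proj θ '' sqc x l ∩ proj θ '' sqc x' l').Nonempty} ≤
      ENNReal.ofReal
        (2 * π * max (Metric.diam (sqc x l)) (Metric.diam (sqc x' l')) / dist x x') := by
  set M := max (diam (sqc x l)) (diam (sqc x' l'))
  have hr : 0 < dist x x' := dist_pos.2 hxx
  obtain ⟨α, hα⟩ := exists_proj_sub_proj_eq_dist_mul_sin x x'
  calc volume {θ ∈ Icc (-(π / 2)) (π / 2) | (proj θ '' sqc x l ∩ proj θ '' sqc x' l').Nonempty}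
      ≤ volume {θ ∈ Icc (-(π / 2)) (π / 2) | |sin (θ + α)| ≤ M / dist x x'} := by
        refine measure_mono fun θ ⟨hθ, hoverlap⟩ => ⟨hθ, ?_⟩
        rw [le_div_iff₀ hr, ← abs_of_pos hr, ← abs_mul, mul_comm, ← hα]
        exact abs_proj_sub_proj_le_max_diam hoverlap
    _ ≤ ENNReal.ofReal (2 * π * (M / dist x x')) :=
        volume_setOf_abs_sin_add_le (by linarith) α
          (div_nonneg (le_max_of_le_left diam_nonneg) hr.le)
    _ = ENNReal.ofReal (2 * π * M / dist x x') := by rw [mul_div_assoc]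

/-- Transversality: the set of angles for which the projections of two squares overlap
has Lebesgue measure at most `2π·max{|Q|,|Q̃|}/|x−x̃|`. -/
theorem measure_angles_of_overlapping_projections
    (x x' : E) (l l' : ℝ) (hl : 0 < l) (hl' : 0 < l') (hxx : x ≠ x') :
    volume {θ ∈ Set.Icc (-(π / 2)) (π / 2) |
        (proj θ '' sqc x l ∩ proj θ '' sqc x' l').Nonempty} ≤
      ENNReal.ofReal
        (2 * π * max (Metric.diam (sqc x l)) (Metric.diam (sqc x' l')) / dist x x') :=
  measure_angles_of_overlapping_projections_general x x' l l' hxx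
end
end

section
/- Let s > 1 and let 𝒞 be a good dyadic cover of an s-set K ⊂ [0,1)², i.e., a finite family of disjoint dyadic squares with Σ_{Q̃ ∈ 𝒞, Q̃ ⊂ Q} |Q̃|ˢ ≤ C·|Q|ˢ for every dyadic square Q, and with Σ_{Q ∈ 𝒞} |Q|ˢ ≤ C. Then Σ_{Q, Q̃ ∈ 𝒞, Q ≠ Q̃} |x_Q − x_{Q̃}|⁻¹ · |Q|ˢ · |Q̃|ˢ ≤ C', where x_Q denotes the center of Q and C' depends only on C and s. -/
open MeasureTheory Set Metric ENNReal Real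

noncomputable section

/-- The dyadic square associated to a parameter triple. -/
def dsq (q : ℤ × ℤ × ℤ) : Set E := dyadicSq q.1 q.2.1 q.2.2

/-- The unit square `[0,1)²`. -/
def unitSq : Set E := {p | p 0 ∈ Set.Ico (0 : ℝ) 1 ∧ p 1 ∈ Set.Ico (0 : ℝ) 1}
/-- The center of the dyadic square with parameters `q = (i, a, b)`. -/
def dctr (q : ℤ × ℤ × ℤ) : E :=
  (EuclideanSpace.equiv (Fin 2) ℝ).symm
    ![((q.2.1 : ℝ) + 1 / 2) * 2 ^ (-q.1), ((q.2.2 : ℝ) + 1 / 2) * 2 ^ (-q.1)]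

/-! Fix `Q ∈ 𝒞`. Since the squares of `𝒞` are disjoint, the center `x_Q` lies outside every other
`Q̃ ∈ 𝒞`, so `|x_Q − x_Q̃| ≥ 2⁻ⁱ/2` when `Q̃` has side `2⁻ⁱ`. Hence the `Q̃` with
`|x_Q − x_Q̃| ≤ 2⁻ʲ` have side at most `2¹⁻ʲ` and lie in one of the four dyadic squares of side
`2¹⁻ʲ` nearest to `x_Q`; by the good-cover condition they carry total weight
`Σ |Q̃|ˢ ≤ 4C (√2·2¹⁻ʲ)ˢ`. Bounding `|x_Q − x_Q̃|⁻¹ ≤ 1 + Σ_{2ʲ ≤ |x_Q − x_Q̃|⁻¹} 2ʲ` and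
exchanging sums gives `Σ_{Q̃ ≠ Q} |x_Q − x_Q̃|⁻¹ |Q̃|ˢ ≤ C + 4C (2√2)ˢ Σⱼ 2^{j(1−s)}`, a convergent
geometric series because `s > 1`. Multiplying by `|Q|ˢ` and summing over `Q` uses `Σ |Q|ˢ ≤ C`
once more. -/
theorem mem_Ico_zpow_iff_floor_eq (m c : ℤ) (x : ℝ) :
    x ∈ Ico ((c : ℝ) * 2 ^ (-m)) ((c + 1 : ℝ) * 2 ^ (-m)) ↔ ⌊x * 2 ^ m⌋ = c := by
  have h : (0 : ℝ) < 2 ^ m := zpow_pos two_pos m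
  rw [Int.floor_eq_iff, zpow_neg, mem_Ico, mul_inv_le_iff₀ h, lt_mul_inv_iff₀ h]

theorem mem_dyadicSq_iff {i a b : ℤ} {p : E} :
    p ∈ dyadicSq i a b ↔ ⌊p 0 * 2 ^ i⌋ = a ∧ ⌊p 1 * 2 ^ i⌋ = b := by
  simp only [dyadicSq, mem_ofPred_eq, mem_Ico_zpow_iff_floor_eq]

theorem floor_mul_two_zpow_eq_of_le {m i : ℤ} (h : m ≤ i) {x y : ℝ}
    (hxy : ⌊x * 2 ^ i⌋ = ⌊y * 2 ^ i⌋) : ⌊x * 2 ^ m⌋ = ⌊y * 2 ^ m⌋ := by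
  obtain ⟨k, rfl⟩ : ∃ k : ℕ, i = m + k := ⟨(i - m).toNat, by omega⟩
  have hsplit (z : ℝ) : z * 2 ^ m = z * 2 ^ (m + k) / ((2 ^ k : ℕ) : ℝ) := by
    rw [zpow_add₀ two_ne_zero, zpow_natCast]; push_cast; field_simp
  rw [hsplit x, hsplit y, Int.floor_div_natCast, Int.floor_div_natCast, hxy]

theorem dctr_mul_two_zpow (q : ℤ × ℤ × ℤ) :
    dctr q 0 * 2 ^ q.1 = q.2.1 + 1 / 2 ∧ dctr q 1 * 2 ^ q.1 = q.2.2 + 1 / 2 := by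
  have h : ((2 : ℝ) ^ q.1)⁻¹ * 2 ^ q.1 = 1 := inv_mul_cancel₀ (zpow_ne_zero _ two_ne_zero)
  simp [dctr, mul_assoc, h]

theorem dctr_mem_dsq (q : ℤ × ℤ × ℤ) : dctr q ∈ dsq q := by
  obtain ⟨h0, h1⟩ := dctr_mul_two_zpow q
  rw [dsq, mem_dyadicSq_iff, h0, h1]
  constructor <;> rw [Int.floor_eq_iff] <;> constructor <;> linarith

theorem two_zpow_le_abs_sub_of_floor_ne {i a : ℤ} {y : ℝ} (h : ⌊y * 2 ^ i⌋ ≠ a) :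
    2 ^ (-i - 1) ≤ |((a : ℝ) + 1 / 2) * 2 ^ (-i) - y| := by
  have hpos : (0 : ℝ) < 2 ^ (-i) := zpow_pos two_pos _
  have hhalf : 1 / 2 ≤ |y * 2 ^ i - (a + 1 / 2)| := by
    contrapose! h
    rw [abs_lt] at h
    rw [Int.floor_eq_iff]; constructor <;> linarith
  have hrw : ((a : ℝ) + 1 / 2) * 2 ^ (-i) - y = -((y * 2 ^ i - (a + 1 / 2)) * 2 ^ (-i)) := by
    rw [zpow_neg]; field_simp; ring
  rw [hrw, abs_neg, abs_mul, abs_of_pos hpos, zpow_sub₀ two_ne_zero, zpow_one]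
  nlinarith

theorem two_zpow_le_dist_dctr_of_notMem {q : ℤ × ℤ × ℤ} {p : E} (hp : p ∉ dsq q) :
    2 ^ (-q.1 - 1) ≤ dist (dctr q) p := by
  obtain ⟨i, a, b⟩ := q
  rw [dsq, mem_dyadicSq_iff, not_and_or] at hp
  have hcoord (k : Fin 2) : |dctr (i, a, b) k - p k| ≤ dist (dctr (i, a, b)) p := by
    simpa [Real.dist_eq] using PiLp.dist_apply_le (dctr (i, a, b)) p k
  rcases hp with h | h
  · exact (two_zpow_le_abs_sub_of_floor_ne h).trans (by simpa [dctr] using hcoord 0)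
  · exact (two_zpow_le_abs_sub_of_floor_ne h).trans (by simpa [dctr] using hcoord 1)

theorem sub_one_le_of_dist_dctr_le {q q' : ℤ × ℤ × ℤ} (hqq' : Disjoint (dsq q) (dsq q')) {n : ℤ}
    (hn : dist (dctr q) (dctr q') ≤ 2 ^ (-n)) : n - 1 ≤ q'.1 := by
  have hnot : dctr q ∉ dsq q' := disjoint_left.1 hqq' (dctr_mem_dsq q)
  rw [dist_comm] at hn
  have := (zpow_le_zpow_iff_right₀ (one_lt_two (α := ℝ))).1
    ((two_zpow_le_dist_dctr_of_notMem hnot).trans hn)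
  omega

theorem dsq_subset_dyadicSq_floor {m : ℤ} {q : ℤ × ℤ × ℤ} (h : m ≤ q.1) :
    dsq q ⊆ dyadicSq m ⌊dctr q 0 * 2 ^ m⌋ ⌊dctr q 1 * 2 ^ m⌋ := by
  intro p hp
  have hc := dctr_mem_dsq q
  rw [dsq, mem_dyadicSq_iff] at hp hc
  exact mem_dyadicSq_iff.2 ⟨floor_mul_two_zpow_eq_of_le h (hp.1.trans hc.1.symm),
    floor_mul_two_zpow_eq_of_le h (hp.2.trans hc.2.symm)⟩

theorem floor_mem_Icc_of_abs_sub_le_half {x y : ℝ} (h : |y - x| ≤ 1 / 2) :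
    ⌊y⌋ ∈ Finset.Icc ⌊x - 1 / 2⌋ (⌊x - 1 / 2⌋ + 1) := by
  rw [abs_sub_le_iff] at h
  rw [Finset.mem_Icc, ← Int.floor_add_one]
  exact ⟨Int.floor_mono (by linarith), Int.floor_mono (by linarith)⟩

theorem dist_le_sqrt_two_mul {x y : E} {c : ℝ} (h0 : |x 0 - y 0| ≤ c) (h1 : |x 1 - y 1| ≤ c) :
    dist x y ≤ √2 * c := by
  have hc : 0 ≤ c := (abs_nonneg _).trans h0
  rw [EuclideanSpace.dist_eq, Fin.sum_univ_two, ← Real.sqrt_sq hc, ← Real.sqrt_mul zero_le_two]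
  gcongr
  simp only [Real.dist_eq, sq_abs]
  nlinarith [sq_le_sq' (abs_le.1 h0).1 (abs_le.1 h0).2, sq_le_sq' (abs_le.1 h1).1 (abs_le.1 h1).2]

theorem diam_dyadicSq_le (i a b : ℤ) : diam (dyadicSq i a b) ≤ √2 * 2 ^ (-i) := by
  have hpos : (0 : ℝ) < 2 ^ (-i) := zpow_pos two_pos _
  refine diam_le_of_forall_dist_le (by positivity) fun x hx y hy => ?_
  simp only [dyadicSq, mem_ofPred_eq, mem_Ico] at hx hy
  apply dist_le_sqrt_two_mul <;> rw [abs_sub_le_iff] <;> constructor <;> nlinarith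

theorem min_le_one_add_sum_two_pow (t : ℝ) (N : ℕ) :
    min t (2 ^ N) ≤ 1 + ∑ j ∈ Finset.range N, if (2 : ℝ) ^ j ≤ t then (2 : ℝ) ^ j else 0 := by
  induction N with
  | zero => simp
  | succ N ih =>
    rw [Finset.sum_range_succ, pow_succ]
    split_ifs with h
    · have : min t (2 ^ N) = 2 ^ N := min_eq_right h
      linarith [min_le_right t (2 ^ N * 2)]
    · have : min t (2 ^ N) = t := min_eq_left (not_le.1 h).le
      linarith [min_le_left t (2 ^ N * 2)]

theorem two_pow_mul_rpow_eq (s : ℝ) (j : ℕ) :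
    (2 : ℝ) ^ j * (√2 * 2 ^ (1 - (j : ℤ))) ^ s = (2 * √2) ^ s * (2 ^ (1 - s)) ^ j := by
  have h2j : (0 : ℝ) < 2 ^ j := by positivity
  rw [zpow_sub₀ two_ne_zero, zpow_one, zpow_natCast, mul_div_assoc', mul_comm √2, div_eq_mul_inv,
    Real.mul_rpow (by positivity) (by positivity), Real.inv_rpow h2j.le,
    Real.rpow_sub two_pos, Real.rpow_one, div_pow, ← Real.rpow_natCast_mul zero_le_two,
    ← Real.rpow_mul_natCast zero_le_two, mul_comm s]
  field_simp

theorem sum_range_two_pow_mul_le {s : ℝ} (hs : 1 < s) {C : ℝ} (hC : 0 ≤ C) (N : ℕ) :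
    ∑ j ∈ Finset.range N, 2 ^ j * (4 * (C * (√2 * 2 ^ (1 - (j : ℤ))) ^ s)) ≤
      4 * C * (2 * √2) ^ s / (1 - 2 ^ (1 - s)) := by
  have hr : (2 : ℝ) ^ (1 - s) < 1 := Real.rpow_lt_one_of_one_lt_of_neg one_lt_two (by linarith)
  calc _ = 4 * C * (2 * √2) ^ s * ∑ j ∈ Finset.range N, (2 ^ (1 - s)) ^ j := by
        rw [Finset.mul_sum]
        refine Finset.sum_congr rfl fun j _ => ?_
        rw [mul_left_comm, mul_left_comm _ C, two_pow_mul_rpow_eq]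
        ring
    _ ≤ _ := by
        have hgeom := geom_sum_Ico_le_of_lt_one (m := 0) (n := N) (by positivity) hr
        rw [← Finset.range_eq_Ico, pow_zero] at hgeom
        rw [div_eq_mul_one_div]
        gcongr

section GoodCover

open scoped Classical

variable {s C : ℝ} {𝒞 : Finset (ℤ × ℤ × ℤ)}

theorem sum_diam_rpow_le_of_dist_dctr_le (hs : 0 ≤ s) (hC : 0 ≤ C)
    (hgood : ∀ i a b : ℤ,
      (∑ q ∈ 𝒞.filter (fun q => dsq q ⊆ dyadicSq i a b), diam (dsq q) ^ s) ≤
        C * diam (dyadicSq i a b) ^ s)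
    (x : E) (n : ℤ) :
    ∑ q ∈ 𝒞.filter (fun q => n - 1 ≤ q.1 ∧ dist x (dctr q) ≤ 2 ^ (-n)), diam (dsq q) ^ s ≤
      4 * (C * (√2 * 2 ^ (1 - n)) ^ s) := by
  set m := n - 1
  set P := Finset.Icc ⌊x 0 * 2 ^ m - 1 / 2⌋ (⌊x 0 * 2 ^ m - 1 / 2⌋ + 1) ×ˢ
    Finset.Icc ⌊x 1 * 2 ^ m - 1 / 2⌋ (⌊x 1 * 2 ^ m - 1 / 2⌋ + 1)
  -- each square lies in the level-`m` dyadic square of its center, one of the four nearest `x`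
  have hmaps : ∀ q ∈ 𝒞.filter (fun q => n - 1 ≤ q.1 ∧ dist x (dctr q) ≤ 2 ^ (-n)),
      (⌊dctr q 0 * 2 ^ m⌋, ⌊dctr q 1 * 2 ^ m⌋) ∈ P := by
    intro q hq
    have hd := (Finset.mem_filter.1 hq).2.2
    have hclose (k : Fin 2) : |dctr q k * 2 ^ m - x k * 2 ^ m| ≤ 1 / 2 := by
      have hk : |dctr q k - x k| ≤ dist x (dctr q) := by
        simpa [Real.dist_eq, abs_sub_comm] using PiLp.dist_apply_le x (dctr q) k
      rw [← sub_mul, abs_mul, abs_of_pos (zpow_pos (two_pos (α := ℝ)) m)]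
      calc |dctr q k - x k| * 2 ^ m ≤ 2 ^ (-n) * 2 ^ m := by gcongr; exact hk.trans hd
        _ = 1 / 2 := by rw [← zpow_add₀ two_ne_zero, show -n + m = -1 by omega]; norm_num
    exact Finset.mem_product.2
      ⟨floor_mem_Icc_of_abs_sub_le_half (hclose 0), floor_mem_Icc_of_abs_sub_le_half (hclose 1)⟩
  rw [← Finset.sum_fiberwise_of_maps_to hmaps]
  calc _ ≤ ∑ _p ∈ P, C * (√2 * 2 ^ (1 - n)) ^ s := by
        refine Finset.sum_le_sum fun p _ => ?_
        calc _ ≤ ∑ q ∈ 𝒞.filter (fun q => dsq q ⊆ dyadicSq m p.1 p.2), diam (dsq q) ^ s := by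
              refine Finset.sum_le_sum_of_subset_of_nonneg (fun q hq => ?_)
                fun _ _ _ => by positivity
              simp only [Finset.mem_filter] at hq ⊢
              exact ⟨hq.1.1, hq.2 ▸ dsq_subset_dyadicSq_floor hq.1.2.1⟩
          _ ≤ C * diam (dyadicSq m p.1 p.2) ^ s := hgood m p.1 p.2
          _ ≤ C * (√2 * 2 ^ (1 - n)) ^ s := by
              rw [show 1 - n = -m by omega]
              gcongr
              exact diam_dyadicSq_le m p.1 p.2
    _ = 4 * (C * (√2 * 2 ^ (1 - n)) ^ s) := by
      have hcard : P.card = 4 := by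
        have h2 (a : ℤ) : (Finset.Icc a (a + 1)).card = 2 := by rw [Int.card_Icc]; omega
        rw [Finset.card_product, h2, h2]
      rw [Finset.sum_const, hcard, nsmul_eq_mul]; norm_num

theorem sum_inv_dist_dctr_mul_le (hs : 1 < s) (hC : 0 ≤ C)
    (hdisj : ∀ q ∈ 𝒞, ∀ q' ∈ 𝒞, q ≠ q' → Disjoint (dsq q) (dsq q'))
    (hgood : ∀ i a b : ℤ,
      (∑ q ∈ 𝒞.filter (fun q => dsq q ⊆ dyadicSq i a b), diam (dsq q) ^ s) ≤
        C * diam (dyadicSq i a b) ^ s)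
    (htot : (∑ q ∈ 𝒞, diam (dsq q) ^ s) ≤ C) {q : ℤ × ℤ × ℤ} (hq : q ∈ 𝒞) :
    ∑ q' ∈ 𝒞.erase q, (dist (dctr q) (dctr q'))⁻¹ * diam (dsq q') ^ s ≤
      C + 4 * C * (2 * √2) ^ s / (1 - 2 ^ (1 - s)) := by
  set w : ℤ × ℤ × ℤ → ℝ := fun q' => diam (dsq q') ^ s
  set d : ℤ × ℤ × ℤ → ℝ := fun q' => dist (dctr q) (dctr q')
  have hdisj' {q'} (hq' : q' ∈ 𝒞.erase q) : Disjoint (dsq q) (dsq q') :=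
    hdisj q hq q' (Finset.mem_of_mem_erase hq') (Finset.ne_of_mem_erase hq').symm
  have hd_pos {q'} (hq' : q' ∈ 𝒞.erase q) : 0 < d q' :=
    (_root_.zpow_pos two_pos _).trans_le (two_zpow_le_dist_dctr_of_notMem
      (disjoint_right.1 (hdisj' hq') (dctr_mem_dsq q')))
  obtain ⟨N, hN⟩ := pow_unbounded_of_one_lt (∑ q' ∈ 𝒞.erase q, (d q')⁻¹) (one_lt_two (α := ℝ))
  -- `2 ^ N` exceeds every `1 / d q'`, so the truncation in `min_le_one_add_sum_two_pow` is void
  have hpoint {q'} (hq' : q' ∈ 𝒞.erase q) : (d q')⁻¹ * w q' ≤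
      w q' + ∑ j ∈ Finset.range N, 2 ^ j * (if (2 : ℝ) ^ j ≤ (d q')⁻¹ then w q' else 0) := by
    have hlt : (d q')⁻¹ < 2 ^ N := (Finset.single_le_sum (fun x hx => (inv_pos.2 (hd_pos hx)).le)
      hq').trans_lt hN
    calc (d q')⁻¹ * w q' = min (d q')⁻¹ (2 ^ N) * w q' := by rw [min_eq_left hlt.le]
      _ ≤ (1 + ∑ j ∈ Finset.range N, if (2 : ℝ) ^ j ≤ (d q')⁻¹ then (2 : ℝ) ^ j else 0) * w q' := by
          gcongr
          exact min_le_one_add_sum_two_pow _ _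
      _ = _ := by
          rw [add_mul, one_mul, Finset.sum_mul]
          congr 1
          exact Finset.sum_congr rfl fun j _ => by split_ifs <;> simp
  have hnear (j : ℕ) : ∑ q' ∈ (𝒞.erase q).filter (fun q' => (2 : ℝ) ^ j ≤ (d q')⁻¹), w q' ≤
      4 * (C * (√2 * 2 ^ (1 - (j : ℤ))) ^ s) := by
    refine le_trans (Finset.sum_le_sum_of_subset_of_nonneg (fun q' hq' => ?_)
      fun _ _ _ => Real.rpow_nonneg diam_nonneg _)
      (sum_diam_rpow_le_of_dist_dctr_le (by linarith) hC hgood (dctr q) j)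
    obtain ⟨hq'C, hj⟩ := Finset.mem_filter.1 hq'
    have hdj : d q' ≤ 2 ^ (-(j : ℤ)) := by
      rw [zpow_neg, zpow_natCast]; exact (le_inv_comm₀ (hd_pos hq'C) (pow_pos two_pos j)).2 hj
    exact Finset.mem_filter.2 ⟨Finset.mem_of_mem_erase hq'C,
      sub_one_le_of_dist_dctr_le (hdisj' hq'C) hdj, hdj⟩
  calc _ ≤ ∑ q' ∈ 𝒞.erase q, (w q' + ∑ j ∈ Finset.range N,
          2 ^ j * (if (2 : ℝ) ^ j ≤ (d q')⁻¹ then w q' else 0)) := Finset.sum_le_sum fun _ => hpoint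
    _ = ∑ q' ∈ 𝒞.erase q, w q' + ∑ j ∈ Finset.range N,
          2 ^ j * ∑ q' ∈ (𝒞.erase q).filter (fun q' => (2 : ℝ) ^ j ≤ (d q')⁻¹), w q' := by
        rw [Finset.sum_add_distrib, Finset.sum_comm]
        simp only [← Finset.mul_sum, Finset.sum_filter]
    _ ≤ C + ∑ j ∈ Finset.range N, 2 ^ j * (4 * (C * (√2 * 2 ^ (1 - (j : ℤ))) ^ s)) := by
        gcongr with j
        exact (Finset.sum_le_sum_of_subset_of_nonneg (Finset.erase_subset q 𝒞)
          fun _ _ _ => Real.rpow_nonneg diam_nonneg _).trans htot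
        exact hnear j
    _ ≤ C + 4 * C * (2 * √2) ^ s / (1 - 2 ^ (1 - s)) := by
        gcongr; exact sum_range_two_pow_mul_le hs hC N

end GoodCover

open scoped Classical in
/-- For a good dyadic cover of an `s`-set (`s > 1`), the double sum
`Σ_{Q ≠ Q̃} |x_Q − x_{Q̃}|⁻¹·|Q|ˢ·|Q̃|ˢ` is bounded by a constant depending only on the
good-cover constant `C` and on `s`. -/
theorem double_sum_bound (s C : ℝ) (hs : 1 < s) (hC : 0 < C) :
    ∃ C' : ℝ, 0 < C' ∧
      ∀ (K : Set E) (𝒞 : Finset (ℤ × ℤ × ℤ)),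
        K ⊆ unitSq → MeasurableSet K → dimH K = ENNReal.ofReal s →
        0 < μH[s] K → μH[s] K < ⊤ →
        (K ⊆ ⋃ q ∈ 𝒞, dsq q) →
        (∀ q ∈ 𝒞, ∀ q' ∈ 𝒞, q ≠ q' → Disjoint (dsq q) (dsq q')) →
        (∀ i a b : ℤ,
          (∑ q ∈ 𝒞.filter (fun q => dsq q ⊆ dyadicSq i a b), Metric.diam (dsq q) ^ s) ≤
            C * Metric.diam (dyadicSq i a b) ^ s) →
        (∑ q ∈ 𝒞, Metric.diam (dsq q) ^ s) ≤ C →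
        (∑ q ∈ 𝒞, ∑ q' ∈ 𝒞,
            if q ≠ q' then
              (dist (dctr q) (dctr q'))⁻¹ * Metric.diam (dsq q) ^ s * Metric.diam (dsq q') ^ s
            else 0) ≤ C' := by
  set B := C + 4 * C * (2 * √2) ^ s / (1 - 2 ^ (1 - s))
  have hr : (2 : ℝ) ^ (1 - s) < 1 := Real.rpow_lt_one_of_one_lt_of_neg one_lt_two (by linarith)
  have hB : 0 < B := by have := sub_pos.2 hr; positivity
  refine ⟨C * B, by positivity, fun K 𝒞 _ _ _ _ _ _ hdisj hgood htot => ?_⟩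
  calc _ = ∑ q ∈ 𝒞, diam (dsq q) ^ s *
        ∑ q' ∈ 𝒞.erase q, (dist (dctr q) (dctr q'))⁻¹ * diam (dsq q') ^ s := by
        refine Finset.sum_congr rfl fun q _ => ?_
        rw [← Finset.sum_filter, Finset.filter_ne, Finset.mul_sum]
        exact Finset.sum_congr rfl fun _ _ => by ring
    _ ≤ ∑ q ∈ 𝒞, diam (dsq q) ^ s * B := Finset.sum_le_sum fun q hq =>
        mul_le_mul_of_nonneg_left (sum_inv_dist_dctr_mul_le hs hC.le hdisj hgood htot hq)
          (Real.rpow_nonneg diam_nonneg _)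
    _ = (∑ q ∈ 𝒞, diam (dsq q) ^ s) * B := by rw [Finset.sum_mul]
    _ ≤ C * B := mul_le_mul_of_nonneg_right htot hB.le
end
end
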